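/- Let (A,C,ψ) be a weak entwining structure with p and act as usual. Then: (1) for all c ∈ C, Σ 1_α 1_β ε(c₍₁₎^α) ⊗ c₍₂₎^β = ψ(c ⊗ 1), where ψ(c₍₁₎ ⊗ 1) = Σ 1_α ⊗ c₍₁₎^α and ψ(c₍₂₎ ⊗ 1) = Σ 1_β ⊗ c₍₂₎^β (this is the left counit identity (ε_C ⊗_A C) ∘ Δ_C = id for the coring Im p); (2) for all x ∈ A ⊗ C and a ∈ A, (A ⊗ ε)(act(p(x) ⊗ a)) = ((A ⊗ ε)(p(x)))·a (i.e. the counit ε_C = (A ⊗ ε)|_{Im p} is right A-linear). -/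
import Mathlib


/-!
STATEMENT 6: For a weak entwining structure (A,C,ψ):
(1) Σ 1_α 1_β ε(c₍₁₎^α) ⊗ c₍₂₎^β = ψ(c ⊗ 1)  (left counit identity for Im p);
(2) (A ⊗ ε)(act(p(x) ⊗ a)) = ((A ⊗ ε)(p(x)))·a  (right A-linearity of the counit).
-/

open TensorProduct

noncomputable section

variable {k A C : Type*} [CommRing k] [Ring A] [Algebra k A]
  [AddCommGroup C] [Module k C] [Coalgebra k C]

/-- The twisted right action `act((a' ⊗ c) ⊗ a) = (μ ⊗ C)(a' ⊗ ψ(c ⊗ a))`. -/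
def act (ψ : C ⊗[k] A →ₗ[k] A ⊗[k] C) :
    (A ⊗[k] C) ⊗[k] A →ₗ[k] A ⊗[k] C :=
  LinearMap.rTensor C (LinearMap.mul' k A) ∘ₗ
    (TensorProduct.assoc k A A C).symm.toLinearMap ∘ₗ
    LinearMap.lTensor A ψ ∘ₗ
    (TensorProduct.assoc k A C A).toLinearMap

/-- `(A ⊗ ε) : A ⊗ C → A` (composed with the canonical iso `A ⊗ k ≅ A`). -/
def epsA : A ⊗[k] C →ₗ[k] A :=
  (TensorProduct.rid k A).toLinearMap ∘ₗ
    LinearMap.lTensor A (Coalgebra.counit (R := k) (A := C))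

/-- `ψ₁ : C → A ⊗ C`, `c ↦ ψ(c ⊗ 1)`. -/
def psiOne (ψ : C ⊗[k] A →ₗ[k] A ⊗[k] C) : C →ₗ[k] A ⊗[k] C :=
  ψ ∘ₗ (TensorProduct.mk k C A).flip 1

/-- `p : A ⊗ C → A ⊗ C`, `p(a ⊗ c) = (μ ⊗ C)(a ⊗ ψ(c ⊗ 1)) = act((a ⊗ c) ⊗ 1)`. -/
def pMap (ψ : C ⊗[k] A →ₗ[k] A ⊗[k] C) : A ⊗[k] C →ₗ[k] A ⊗[k] C :=
  act ψ ∘ₗ (TensorProduct.mk k (A ⊗[k] C) A).flip 1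


private lemma act_tmul' (ψ : C ⊗[k] A →ₗ[k] A ⊗[k] C) (a b : A) (c : C) :
    act ψ ((a ⊗ₜ c) ⊗ₜ b) = LinearMap.rTensor C (LinearMap.mulLeft k a) (ψ (c ⊗ₜ b)) := by
  simp only [act, LinearMap.comp_apply, LinearEquiv.coe_coe, TensorProduct.assoc_tmul,
    LinearMap.lTensor_tmul]
  induction ψ (c ⊗ₜ b) using TensorProduct.induction_on with
  | zero => simp
  | tmul x y => simp [LinearMap.mul'_apply]
  | add x y hx hy => simp_all [tmul_add]

private lemma act_rTensor' (ψ : C ⊗[k] A →ₗ[k] A ⊗[k] C) (a b : A) (z : A ⊗[k] C) :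
    act ψ (LinearMap.rTensor C (LinearMap.mulLeft k a) z ⊗ₜ b) =
      LinearMap.rTensor C (LinearMap.mulLeft k a) (act ψ (z ⊗ₜ b)) := by
  induction z using TensorProduct.induction_on with
  | zero => simp
  | tmul x y =>
      simp only [LinearMap.rTensor_tmul, LinearMap.mulLeft_apply, act_tmul',
        LinearMap.mulLeft_mul, LinearMap.rTensor_comp, LinearMap.comp_apply]
  | add x y hx hy => simp_all [add_tmul]

private lemma epsA_tmul' (a : A) (c : C) :
    epsA (a ⊗ₜ[k] c) = Coalgebra.counit (R := k) c • a := by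
  simp [epsA]

private lemma epsA_rTensor' (a : A) (z : A ⊗[k] C) :
    epsA (LinearMap.rTensor C (LinearMap.mulLeft k a) z) = a * epsA z := by
  induction z using TensorProduct.induction_on with
  | zero => simp
  | tmul x y => simp [epsA_tmul', mul_smul_comm]
  | add x y hx hy => simp_all [mul_add]

private lemma pMap_apply' (ψ : C ⊗[k] A →ₗ[k] A ⊗[k] C) (z : A ⊗[k] C) :
    pMap ψ z = act ψ (z ⊗ₜ 1) := rfl

theorem statement6 (ψ : C ⊗[k] A →ₗ[k] A ⊗[k] C)
    -- (i) ψ ∘ (C ⊗ μ) = (μ ⊗ C) ∘ (A ⊗ ψ) ∘ (ψ ⊗ A)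
    (hmul : ∀ (c : C) (a b : A), ψ (c ⊗ₜ (a * b)) = act ψ (ψ (c ⊗ₜ a) ⊗ₜ b))
    -- (ii) (A ⊗ Δ) ∘ ψ = (ψ ⊗ C) ∘ (C ⊗ ψ) ∘ (Δ ⊗ A)
    (hcomul : LinearMap.lTensor A (Coalgebra.comul (R := k) (A := C)) ∘ₗ ψ =
      (TensorProduct.assoc k A C C).toLinearMap ∘ₗ
        LinearMap.rTensor C ψ ∘ₗ
        (TensorProduct.assoc k C A C).symm.toLinearMap ∘ₗ
        LinearMap.lTensor C ψ ∘ₗ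
        (TensorProduct.assoc k C C A).toLinearMap ∘ₗ
        LinearMap.rTensor A (Coalgebra.comul (R := k) (A := C)))
    -- (iii') Σ a_α ε(c^α) = Σ 1_α a ε(c^α)
    (hcounit' : ∀ (c : C) (a : A),
      epsA (ψ (c ⊗ₜ a)) = epsA (ψ (c ⊗ₜ (1 : A))) * a)
    -- (iv') Σ 1_α ε(c₍₁₎^α) ⊗ c₍₂₎ = Σ 1_α ⊗ c^α
    (hcomul' : ∀ c : C,
      LinearMap.rTensor C (epsA ∘ₗ psiOne ψ)
          (Coalgebra.comul (R := k) (A := C) c) = ψ (c ⊗ₜ (1 : A))) :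
    -- (1) Σ 1_α 1_β ε(c₍₁₎^α) ⊗ c₍₂₎^β = ψ(c ⊗ 1)
    (∀ c : C,
      pMap ψ (LinearMap.rTensor C (epsA ∘ₗ psiOne ψ)
          (Coalgebra.comul (R := k) (A := C) c)) = ψ (c ⊗ₜ (1 : A))) ∧
    -- (2) (A ⊗ ε)(act(p(x) ⊗ a)) = ((A ⊗ ε)(p(x)))·a
    (∀ (x : A ⊗[k] C) (a : A),
      epsA (act ψ (pMap ψ x ⊗ₜ a)) = epsA (pMap ψ x) * a) := by
  have key1 : ∀ c : C, pMap ψ (ψ (c ⊗ₜ (1:A))) = ψ (c ⊗ₜ (1:A)) := by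
    intro c
    rw [pMap_apply', ← hmul c 1 1, one_mul]
  constructor
  · intro c
    rw [hcomul', key1]
  · intro x a
    induction x using TensorProduct.induction_on with
    | zero => simp
    | tmul a' c =>
        rw [pMap_apply', act_tmul', act_rTensor', epsA_rTensor', epsA_rTensor',
          ← hmul c 1 a, one_mul, hcounit', mul_assoc]
    | add x y hx hy =>
        simp only [map_add, add_tmul] at *
        rw [hx, hy, add_mul]
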